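/- Let S be a finite bichromatic point set and B a red-cross-safe axis-aligned box (all points of S in cross(B) are red). Then all points of S contained in B dominate the same subset of blue points of S, and all points of S contained in B are dominated by the same subset of blue points of S. -/

import Mathlib

open Classical

noncomputable section

abbrev Pt := ℝ × ℝ

/-- An axis-aligned box in the plane. -/
structure Box where
  x0 : ℝ
  x1 : ℝ
  y0 : ℝ
  y1 : ℝ
  hx : x0 < x1
  hy : y0 < y1

/-- The cross of a box: the union of its vertical and horizontal strips. -/
def Box.cross (B : Box) : Set Pt :=
  {p | (B.x0 ≤ p.1 ∧ p.1 ≤ B.x1) ∨ (B.y0 ≤ p.2 ∧ p.2 ≤ B.y1)}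

/-- The four open quadrants of a box. -/
def Box.NE (B : Box) : Set Pt := {p | B.x1 < p.1 ∧ B.y1 < p.2}
def Box.NW (B : Box) : Set Pt := {p | p.1 < B.x0 ∧ B.y1 < p.2}
def Box.SE (B : Box) : Set Pt := {p | B.x1 < p.1 ∧ p.2 < B.y0}
def Box.SW (B : Box) : Set Pt := {p | p.1 < B.x0 ∧ p.2 < B.y0}

/-- Membership in the open interior of a box. -/
def Box.inside (B : Box) (p : Pt) : Prop :=
  B.x0 < p.1 ∧ p.1 < B.x1 ∧ B.y0 < p.2 ∧ p.2 < B.y1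

/-- Membership in the closed box. -/
def Box.memClosed (B : Box) (p : Pt) : Prop :=
  B.x0 ≤ p.1 ∧ p.1 ≤ B.x1 ∧ B.y0 ≤ p.2 ∧ p.2 ≤ B.y1

/-- `p` avoids the boundary lines of the box and of its quadrants. -/
def Box.offBoundary (B : Box) (p : Pt) : Prop :=
  p.1 ≠ B.x0 ∧ p.1 ≠ B.x1 ∧ p.2 ≠ B.y0 ∧ p.2 ≠ B.y1

/-- Minimal points of `T` towards the SW corner of the NE quadrant
(the usual minimal points under coordinatewise domination). -/
def neMinSet (T : Set Pt) : Set Pt :=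
  {p ∈ T | ∀ q ∈ T, (q.1 ≤ p.1 ∧ q.2 ≤ p.2) → q = p}

/-- Minimal points of `T` towards the SE corner of the NW quadrant. -/
def nwMinSet (T : Set Pt) : Set Pt :=
  {p ∈ T | ∀ q ∈ T, (p.1 ≤ q.1 ∧ q.2 ≤ p.2) → q = p}

/-- Minimal points of `T` towards the NW corner of the SE quadrant. -/
def seMinSet (T : Set Pt) : Set Pt :=
  {p ∈ T | ∀ q ∈ T, (q.1 ≤ p.1 ∧ p.2 ≤ q.2) → q = p}

/-- Minimal points of `T` towards the NE corner of the SW quadrant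
(the usual maximal points under coordinatewise domination). -/
def swMinSet (T : Set Pt) : Set Pt :=
  {p ∈ T | ∀ q ∈ T, (p.1 ≤ q.1 ∧ p.2 ≤ q.2) → q = p}

/-- `z` lies in the open axis-aligned rectangle spanned by `p` and `q`. -/
def openRect (p q z : Pt) : Prop :=
  min p.1 q.1 < z.1 ∧ z.1 < max p.1 q.1 ∧ min p.2 q.2 < z.2 ∧ z.2 < max p.2 q.2

/-- `p` and `q` see each other in `S`: the open rectangle they span is empty of `S`. -/
def sees (S : Set Pt) (p q : Pt) : Prop := ∀ z ∈ S, ¬ openRect p q z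

/-- `p` participates in `S`: some point of the opposite color sees `p`. -/
def participates (S : Set Pt) (color : Pt → Bool) (p : Pt) : Prop :=
  ∃ q ∈ S, color q ≠ color p ∧ sees S p q

/-- All points of `S` in the cross of `B` have color `c`. -/
def crossSafeFor (S : Set Pt) (color : Pt → Bool) (c : Bool) (B : Box) : Prop :=
  ∀ p ∈ S, p ∈ B.cross → color p = c

/-- `B` is `c`-safe for `S`: `c`-cross-safe and the four directional minimal
sets of the quadrants only contain points of color `c`. -/
def safeFor (S : Set Pt) (color : Pt → Bool) (c : Bool) (B : Box) : Prop :=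
  crossSafeFor S color c B ∧
  (∀ p ∈ neMinSet (S ∩ B.NE), color p = c) ∧
  (∀ p ∈ nwMinSet (S ∩ B.NW), color p = c) ∧
  (∀ p ∈ seMinSet (S ∩ B.SE), color p = c) ∧
  (∀ p ∈ swMinSet (S ∩ B.SW), color p = c)

/-- `B` is safe: red-safe (`true`) or blue-safe (`false`). -/
def isSafe (S : Set Pt) (color : Pt → Bool) (B : Box) : Prop :=
  safeFor S color true B ∨ safeFor S color false B

/-- General position: pairwise distinct x-coordinates and y-coordinates. -/
def genPos (S : Set Pt) : Prop :=
  ∀ p ∈ S, ∀ q ∈ S, p ≠ q → p.1 ≠ q.1 ∧ p.2 ≠ q.2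

/-! A blue point of `S` avoids the cross of `B`, so each of its coordinates lies strictly on one
side of the corresponding side interval of `B`. Comparing it with a point inside `B` therefore
only depends on the quadrant of `B` containing it, not on the inside point. -/

section LinearOrder

variable {α : Type*} [LinearOrder α] {a b s t : α}

lemma le_iff_lt_left_of_mem_Ioo_of_notMem_Icc (ht : t ∈ Set.Ioo a b) (hs : s ∉ Set.Icc a b) :
    s ≤ t ↔ s < a := by
  simp only [Set.mem_Icc, not_and_or, not_le] at hs
  exact ⟨fun hst => hs.resolve_right (hst.trans_lt ht.2).asymm, fun hsa => (hsa.trans ht.1).le⟩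

lemma le_iff_lt_right_of_mem_Ioo_of_notMem_Icc (ht : t ∈ Set.Ioo a b) (hs : s ∉ Set.Icc a b) :
    t ≤ s ↔ b < s := by
  simp only [Set.mem_Icc, not_and_or, not_le] at hs
  exact ⟨fun hts => hs.resolve_left (ht.1.trans_le hts).asymm, fun hbs => (ht.2.trans hbs).le⟩

end LinearOrder

namespace Box

variable {B : Box} {p q : Pt}

lemma notMem_cross_iff : q ∉ B.cross ↔ q.1 ∉ Set.Icc B.x0 B.x1 ∧ q.2 ∉ Set.Icc B.y0 B.y1 := by
  simp only [cross, Set.mem_ofPred_eq, Set.mem_Icc, not_or]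

lemma inside_iff : B.inside p ↔ p.1 ∈ Set.Ioo B.x0 B.x1 ∧ p.2 ∈ Set.Ioo B.y0 B.y1 := by
  simp only [inside, Set.mem_Ioo, and_assoc]

lemma le_inside_iff_mem_SW (hp : B.inside p) (hq : q ∉ B.cross) :
    (q.1 ≤ p.1 ∧ q.2 ≤ p.2) ↔ q ∈ B.SW := by
  rw [inside_iff] at hp
  rw [notMem_cross_iff] at hq
  rw [le_iff_lt_left_of_mem_Ioo_of_notMem_Icc hp.1 hq.1,
    le_iff_lt_left_of_mem_Ioo_of_notMem_Icc hp.2 hq.2]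
  rfl

lemma inside_le_iff_mem_NE (hp : B.inside p) (hq : q ∉ B.cross) :
    (p.1 ≤ q.1 ∧ p.2 ≤ q.2) ↔ q ∈ B.NE := by
  rw [inside_iff] at hp
  rw [notMem_cross_iff] at hq
  rw [le_iff_lt_right_of_mem_Ioo_of_notMem_Icc hp.1 hq.1,
    le_iff_lt_right_of_mem_Ioo_of_notMem_Icc hp.2 hq.2]
  rfl

end Box

lemma notMem_cross_of_crossSafeFor {S : Set Pt} {color : Pt → Bool} {c : Bool} {B : Box}
    (hcs : crossSafeFor S color c B) {q : Pt} (hq : q ∈ S) (hqc : color q ≠ c) :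
    q ∉ B.cross :=
  fun hcross => hqc (hcs q hq hcross)

theorem stmt5 (S : Finset Pt) (color : Pt → Bool)
    (B : Box)
    (hcs : crossSafeFor (↑S : Set Pt) color true B) :
    ∀ p ∈ S, ∀ p' ∈ S, B.inside p → B.inside p' →
      ∀ q ∈ S, color q = false →
        ((q.1 ≤ p.1 ∧ q.2 ≤ p.2) ↔ (q.1 ≤ p'.1 ∧ q.2 ≤ p'.2)) ∧
        ((p.1 ≤ q.1 ∧ p.2 ≤ q.2) ↔ (p'.1 ≤ q.1 ∧ p'.2 ≤ q.2)) := by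
  intro p _ p' _ hp hp' q hq hblue
  have hcross : q ∉ B.cross := notMem_cross_of_crossSafeFor hcs hq (by simp [hblue])
  exact ⟨(Box.le_inside_iff_mem_SW hp hcross).trans (Box.le_inside_iff_mem_SW hp' hcross).symm,
    (Box.inside_le_iff_mem_NE hp hcross).trans (Box.inside_le_iff_mem_NE hp' hcross).symm⟩
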